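/- arXiv:1102.4634 — 2 statements merged into one kernel-verified Lean document; each statement's English description precedes it below -/
import Mathlib

section
/- Let G be a connected graph containing P_3 (path on three vertices) as a subgraph, and let H be a connected graph containing as a subgraph the graph H_1 on vertices x, y, z with edges (x,y), (y,y), (y,z) (a path of length two with a loop at the middle vertex). Then G × H contains K_{2,3} as a subgraph, and hence is not a median graph. -/
/-- A graph allowing loops: a symmetric adjacency relation on `V`. -/
structure LoopGraph (V : Type) where
  Adj : V → V → Prop
  symm : ∀ {u v : V}, Adj u v → Adj v u

namespace LoopGraph

variable {V W : Type}

/-- `Walk G u v n` : there is a walk of length `n` from `u` to `v` in `G`. -/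
inductive Walk (G : LoopGraph V) : V → V → ℕ → Prop
  | nil (u : V) : Walk G u u 0
  | cons {u w v : V} {n : ℕ} : G.Adj u w → Walk G w v n → Walk G u v (n + 1)

def Connected (G : LoopGraph V) : Prop := ∀ u v : V, ∃ n : ℕ, G.Walk u v n

/-- Distance: the length of a shortest walk. -/
noncomputable def dist (G : LoopGraph V) (u v : V) : ℕ := sInf {n : ℕ | G.Walk u v n}

/-- `m` lies on a geodesic from `a` to `b`. -/
def Between (G : LoopGraph V) (a m b : V) : Prop :=
  G.dist a m + G.dist m b = G.dist a b

/-- `m` is a median of the triple `a, b, c`. -/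
def MedianOf (G : LoopGraph V) (m a b c : V) : Prop :=
  G.Between a m b ∧ G.Between a m c ∧ G.Between b m c

/-- A median graph: connected, loopless, and every triple of vertices has a
unique median. -/
def IsMedian (G : LoopGraph V) : Prop :=
  (∀ v : V, ¬ G.Adj v v) ∧ G.Connected ∧
    ∀ a b c : V, ∃! m : V, G.MedianOf m a b c

/-- The direct (tensor) product of two graphs with loops. -/
def tensor (G : LoopGraph V) (H : LoopGraph W) : LoopGraph (V × W) where
  Adj p q := G.Adj p.1 q.1 ∧ H.Adj p.2 q.2
  symm h := ⟨G.symm h.1, H.symm h.2⟩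

def Bipartite (G : LoopGraph V) : Prop :=
  ∃ c : V → Bool, ∀ {u v : V}, G.Adj u v → c u ≠ c v

/-- `G` contains `K_{2,3}` as a (not necessarily induced) subgraph. -/
def ContainsK23 (G : LoopGraph V) : Prop :=
  ∃ f : Fin 2 ⊕ Fin 3 → V, Function.Injective f ∧
    ∀ (a : Fin 2) (b : Fin 3), G.Adj (f (Sum.inl a)) (f (Sum.inr b))

end LoopGraph

/-- The path graph on `k` vertices, as a loop graph (no loops). -/
def pathLG (k : ℕ) : LoopGraph (Fin k) where
  Adj i j := i.val + 1 = j.val ∨ j.val + 1 = i.val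
  symm h := h.symm

/-- `E_l`: the path on `l` vertices `x_1, …, x_l` with a loop at the end vertex `x_1`. -/
def ELoopPath (l : ℕ) : LoopGraph (Fin l) where
  Adj i j := i.val + 1 = j.val ∨ j.val + 1 = i.val ∨ (i.val = 0 ∧ j.val = 0)
  symm h := by tauto

namespace LoopGraph

variable {V : Type} {G : LoopGraph V}

lemma dist_le_of_walk {u v : V} {n : ℕ} (h : G.Walk u v n) : G.dist u v ≤ n :=
  Nat.sInf_le h

lemma walk_dist (hc : G.Connected) (u v : V) : G.Walk u v (G.dist u v) :=
  Nat.sInf_mem (hc u v)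

lemma eq_of_dist_eq_zero (hc : G.Connected) {u v : V} (h : G.dist u v = 0) : u = v := by
  have hw := walk_dist hc u v
  rw [h] at hw
  cases hw; rfl

lemma adj_of_dist_eq_one (hc : G.Connected) {u v : V} (h : G.dist u v = 1) : G.Adj u v := by
  have hw := walk_dist hc u v
  rw [h] at hw
  cases hw with
  | cons ha hw' => cases hw'; exact ha

lemma dist_eq_one (hc : G.Connected) {u v : V} (h : G.Adj u v) (hne : u ≠ v) :
    G.dist u v = 1 := by
  have h1 : G.dist u v ≤ 1 := dist_le_of_walk (.cons h (.nil v))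
  have h0 : G.dist u v ≠ 0 := fun h0 => hne (eq_of_dist_eq_zero hc h0)
  omega

lemma no_triangle (hM : G.IsMedian) {a b c : V} (hab : G.Adj a b) (hac : G.Adj a c)
    (hbc : G.Adj b c) (nab : a ≠ b) (nac : a ≠ c) (nbc : b ≠ c) : False := by
  obtain ⟨-, hc, hmed⟩ := hM
  obtain ⟨m, ⟨h1, h2, h3⟩, -⟩ := hmed a b c
  have dab := dist_eq_one hc hab nab
  have dac := dist_eq_one hc hac nac
  have dbc := dist_eq_one hc hbc nbc
  have dba := dist_eq_one hc (G.symm hab) nab.symm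
  unfold Between at h1 h2 h3
  rw [dab] at h1
  have h0 : G.dist a m = 0 ∨ G.dist m b = 0 := by omega
  rcases h0 with h0 | h0
  · obtain rfl := (eq_of_dist_eq_zero hc h0).symm
    rw [dba, dac] at h3
    omega
  · obtain rfl := eq_of_dist_eq_zero hc h0
    rw [dab, dbc] at h2
    omega

lemma not_isMedian_of_containsK23 (h : G.ContainsK23) : ¬ G.IsMedian := by
  intro hM
  obtain ⟨f, hinj, hadj⟩ := h
  have hc : G.Connected := hM.2.1
  have hmed := hM.2.2
  have hne : ∀ p q : Fin 2 ⊕ Fin 3, p ≠ q → f p ≠ f q := fun p q hpq he => hpq (hinj he)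
  -- distances between distinct right-side vertices are between 1 and 2
  have hdist2 : ∀ (i j : Fin 3), G.dist (f (Sum.inr i)) (f (Sum.inr j)) ≤ 2 := by
    intro i j
    exact dist_le_of_walk (.cons (G.symm (hadj 0 i)) (.cons (hadj 0 j) (.nil _)))
  have hdpos : ∀ (i j : Fin 3), i ≠ j → G.dist (f (Sum.inr i)) (f (Sum.inr j)) ≠ 0 := by
    intro i j hij h0
    exact hne _ _ (fun he => hij (by simpa using he)) (eq_of_dist_eq_zero hc h0)
  -- if some pair of w's is at distance 1, we get a triangle with u₁
  have htri : ∀ (i j : Fin 3), i ≠ j → G.dist (f (Sum.inr i)) (f (Sum.inr j)) = 1 → False := by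
    intro i j hij h1
    have hadjw : G.Adj (f (Sum.inr i)) (f (Sum.inr j)) := adj_of_dist_eq_one hc h1
    exact no_triangle hM (hadj 0 i) (hadj 0 j) hadjw
      (hne _ _ (by simp)) (hne _ _ (by simp))
      (hne _ _ (fun he => hij (by simpa using he)))
  -- hence all pairwise distances between the w's are 2
  have hd : ∀ (i j : Fin 3), i ≠ j → G.dist (f (Sum.inr i)) (f (Sum.inr j)) = 2 := by
    intro i j hij
    have h2 := hdist2 i j
    have h0 := hdpos i j hij
    have h1 : G.dist (f (Sum.inr i)) (f (Sum.inr j)) ≠ 1 := fun h => htri i j hij h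
    omega
  -- both u₁ and u₂ are medians of (w₁, w₂, w₃)
  have hmedu : ∀ a : Fin 2,
      G.MedianOf (f (Sum.inl a)) (f (Sum.inr 0)) (f (Sum.inr 1)) (f (Sum.inr 2)) := by
    intro a
    have d1 : ∀ i : Fin 3, G.dist (f (Sum.inr i)) (f (Sum.inl a)) = 1 := fun i =>
      dist_eq_one hc (G.symm (hadj a i)) (hne _ _ (by simp))
    have d2 : ∀ i : Fin 3, G.dist (f (Sum.inl a)) (f (Sum.inr i)) = 1 := fun i =>
      dist_eq_one hc (hadj a i) (hne _ _ (by simp))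
    refine ⟨?_, ?_, ?_⟩ <;>
      simp only [Between, d1, d2, hd 0 1 (by decide), hd 0 2 (by decide),
        hd 1 2 (by decide)]
  obtain ⟨m, -, huniq⟩ := hmed (f (Sum.inr 0)) (f (Sum.inr 1)) (f (Sum.inr 2))
  have e1 := huniq _ (hmedu 0)
  have e2 := huniq _ (hmedu 1)
  exact hne (Sum.inl 0) (Sum.inl 1) (by simp) (e1.trans e2.symm)

end LoopGraph

/-- If `G` is connected and contains `P₃` as a subgraph, and `H` is connected and
contains `H₁` (a path `x–y–z` with a loop at the middle vertex `y`) as a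
subgraph, then `G × H` contains `K_{2,3}` as a subgraph and hence is not a
median graph. -/
theorem p3_times_H1_not_median {V W : Type} (G : LoopGraph V) (H : LoopGraph W)
    (hGc : G.Connected) (hHc : H.Connected)
    (hP3 : ∃ v₁ v₂ v₃ : V, v₁ ≠ v₂ ∧ v₂ ≠ v₃ ∧ v₁ ≠ v₃ ∧ G.Adj v₁ v₂ ∧ G.Adj v₂ v₃)
    (hH1 : ∃ x y z : W, x ≠ y ∧ y ≠ z ∧ x ≠ z ∧ H.Adj x y ∧ H.Adj y y ∧ H.Adj y z) :
    (G.tensor H).ContainsK23 ∧ ¬ (G.tensor H).IsMedian := by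
  obtain ⟨v₁, v₂, v₃, n12, n23, n13, g12, g23⟩ := hP3
  obtain ⟨x, y, z, nxy, nyz, nxz, hxy, hyy, hyz⟩ := hH1
  have hK : (G.tensor H).ContainsK23 := by
    refine ⟨Sum.elim ![(v₁, y), (v₃, y)] ![(v₂, x), (v₂, y), (v₂, z)], ?_, ?_⟩
    · intro a b
      rcases a with a | a <;> rcases b with b | b <;>
        fin_cases a <;> fin_cases b <;>
        simp_all [Prod.ext_iff] <;> tauto
    · intro a b
      fin_cases a <;> fin_cases b <;>
        exact ⟨by first | exact g12 | exact G.symm g23,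
               by first | exact H.symm hxy | exact hyy | exact hyz⟩
  exact ⟨hK, LoopGraph.not_isMedian_of_containsK23 hK⟩
end

section
/- Let G be a connected graph containing P_3 as a subgraph and let H be a connected graph containing, as an induced subgraph, the graph D_k (k ≥ 3) consisting of a cycle x_1, x_2, ..., x_k together with a loop at x_1. Then G × D_k is not a median graph; specifically, in G × H the triple (v_2,x_1), (v_2,x_2), (v_2,x_k) admits two distinct median vertices, where v_1 ~ v_2 ~ v_3 is the path P_3 in G and v_2 carries no loop. -/
namespace LoopGraph

lemma walk_zero {V : Type} {G : LoopGraph V} {u v : V} (h : G.Walk u v 0) : u = v := by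
  cases h; rfl

lemma walk_one {V : Type} {G : LoopGraph V} {u v : V} (h : G.Walk u v 1) : G.Adj u v := by
  cases h with
  | cons hadj hw => rwa [walk_zero hw] at hadj

lemma dist_eq_one_s7 {V : Type} {G : LoopGraph V} {u v : V}
    (h1 : G.Walk u v 1) (hne : u ≠ v) : G.dist u v = 1 := by
  have hmem : G.dist u v ∈ {n : ℕ | G.Walk u v n} := Nat.sInf_mem ⟨1, h1⟩
  have hle : G.dist u v ≤ 1 := Nat.sInf_le h1
  interval_cases h : G.dist u v
  · exact absurd (walk_zero hmem) hne
  · rfl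

lemma dist_eq_two {V : Type} {G : LoopGraph V} {u v : V}
    (h2 : G.Walk u v 2) (hne : u ≠ v) (hna : ¬ G.Adj u v) : G.dist u v = 2 := by
  have hmem : G.dist u v ∈ {n : ℕ | G.Walk u v n} := Nat.sInf_mem ⟨2, h2⟩
  have hle : G.dist u v ≤ 2 := Nat.sInf_le h2
  interval_cases h : G.dist u v
  · exact absurd (walk_zero hmem) hne
  · exact absurd (walk_one hmem) hna
  · rfl

end LoopGraph

/-- If `G` is connected and contains the path `v₁ ~ v₂ ~ v₃` (with no loop at
`v₂`), and `H` contains as an induced subgraph the graph `D_k` (`k ≥ 3`): a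
cycle `x₁, …, x_k` with a loop at `x₁`, then `G × H` is not a median graph;
specifically the triple `(v₂,x₁), (v₂,x₂), (v₂,x_k)` admits two distinct
median vertices. -/
theorem p3_times_Dk_not_median {V W : Type} (G : LoopGraph V) (H : LoopGraph W)
    (hGc : G.Connected) (hHc : H.Connected)
    (v₁ v₂ v₃ : V) (hv12 : v₁ ≠ v₂) (hv23 : v₂ ≠ v₃) (hv13 : v₁ ≠ v₃)
    (h12 : G.Adj v₁ v₂) (h23 : G.Adj v₂ v₃) (hnoloop : ¬ G.Adj v₂ v₂)
    (k : ℕ) (hk : 3 ≤ k) (x : Fin k → W) (hinj : Function.Injective x)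
    (hind : ∀ i j : Fin k, H.Adj (x i) (x j) ↔
      (((i : ℕ) = 0 ∧ (j : ℕ) = 0) ∨ (j : ℕ) = (i : ℕ) + 1 ∨ (i : ℕ) = (j : ℕ) + 1 ∨
        ((i : ℕ) = 0 ∧ (j : ℕ) = k - 1) ∨ ((j : ℕ) = 0 ∧ (i : ℕ) = k - 1))) :
    ¬ (G.tensor H).IsMedian ∧
      ∃ m₁ m₂ : V × W, m₁ ≠ m₂ ∧
        (G.tensor H).MedianOf m₁ (v₂, x ⟨0, by omega⟩) (v₂, x ⟨1, by omega⟩)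
          (v₂, x ⟨k - 1, by omega⟩) ∧
        (G.tensor H).MedianOf m₂ (v₂, x ⟨0, by omega⟩) (v₂, x ⟨1, by omega⟩)
          (v₂, x ⟨k - 1, by omega⟩) := by
  set a0 : Fin k := ⟨0, by omega⟩ with ha0
  set a1 : Fin k := ⟨1, by omega⟩ with ha1
  set ak : Fin k := ⟨k - 1, by omega⟩ with hak
  -- adjacencies in H
  have hH00 : H.Adj (x a0) (x a0) := (hind a0 a0).mpr (Or.inl ⟨rfl, rfl⟩)
  have hH01 : H.Adj (x a0) (x a1) := (hind a0 a1).mpr (Or.inr (Or.inl rfl))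
  have hH0k : H.Adj (x a0) (x ak) := (hind a0 ak).mpr (by
    right; right; right; left; exact ⟨rfl, rfl⟩)
  have hH10 : H.Adj (x a1) (x a0) := H.symm hH01
  have hHk0 : H.Adj (x ak) (x a0) := H.symm hH0k
  -- inequalities of x values
  have hx01 : x a0 ≠ x a1 := fun h => by
    have := hinj h; simp [ha0, ha1, Fin.ext_iff] at this
  have hx0k : x a0 ≠ x ak := fun h => by
    have := hinj h; simp [ha0, hak, Fin.ext_iff] at this; omega
  have hx1k : x a1 ≠ x ak := fun h => by
    have := hinj h; simp [ha1, hak, Fin.ext_iff] at this; omega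
  -- vertices
  set T := G.tensor H with hT
  set A : V × W := (v₂, x a0)
  set B : V × W := (v₂, x a1)
  set C : V × W := (v₂, x ak)
  set M1 : V × W := (v₁, x a0)
  set M2 : V × W := (v₃, x a0)
  -- adjacencies in the tensor product
  have tAM1 : T.Adj A M1 := ⟨G.symm h12, hH00⟩
  have tM1A : T.Adj M1 A := T.symm tAM1
  have tM1B : T.Adj M1 B := ⟨h12, hH01⟩
  have tBM1 : T.Adj B M1 := T.symm tM1B
  have tM1C : T.Adj M1 C := ⟨h12, hH0k⟩
  have tAM2 : T.Adj A M2 := ⟨h23, hH00⟩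
  have tM2A : T.Adj M2 A := T.symm tAM2
  have tM2B : T.Adj M2 B := ⟨G.symm h23, hH01⟩
  have tBM2 : T.Adj B M2 := T.symm tM2B
  have tM2C : T.Adj M2 C := ⟨G.symm h23, hH0k⟩
  -- non-adjacency / inequality of the triple
  have hnAB : ¬ T.Adj A B := fun h => hnoloop h.1
  have hnAC : ¬ T.Adj A C := fun h => hnoloop h.1
  have hnBC : ¬ T.Adj B C := fun h => hnoloop h.1
  have hAB : A ≠ B := fun h => hx01 (congrArg Prod.snd h)
  have hAC : A ≠ C := fun h => hx0k (congrArg Prod.snd h)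
  have hBC : B ≠ C := fun h => hx1k (congrArg Prod.snd h)
  have hAM1 : A ≠ M1 := fun h => hv12 (congrArg Prod.fst h).symm
  have hM1B : M1 ≠ B := fun h => hv12 (congrArg Prod.fst h)
  have hM1C : M1 ≠ C := fun h => hv12 (congrArg Prod.fst h)
  have hAM2 : A ≠ M2 := fun h => hv23 (congrArg Prod.fst h)
  have hM2B : M2 ≠ B := fun h => hv23 (congrArg Prod.fst h).symm
  have hM2C : M2 ≠ C := fun h => hv23 (congrArg Prod.fst h).symm
  -- distances
  have dAM1 : T.dist A M1 = 1 :=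
    LoopGraph.dist_eq_one_s7 (LoopGraph.Walk.cons tAM1 (LoopGraph.Walk.nil _)) hAM1
  have dM1B : T.dist M1 B = 1 :=
    LoopGraph.dist_eq_one_s7 (LoopGraph.Walk.cons tM1B (LoopGraph.Walk.nil _)) hM1B
  have dM1C : T.dist M1 C = 1 :=
    LoopGraph.dist_eq_one_s7 (LoopGraph.Walk.cons tM1C (LoopGraph.Walk.nil _)) hM1C
  have dBM1 : T.dist B M1 = 1 :=
    LoopGraph.dist_eq_one_s7 (LoopGraph.Walk.cons tBM1 (LoopGraph.Walk.nil _)) (Ne.symm hM1B)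
  have dAM2 : T.dist A M2 = 1 :=
    LoopGraph.dist_eq_one_s7 (LoopGraph.Walk.cons tAM2 (LoopGraph.Walk.nil _)) hAM2
  have dM2B : T.dist M2 B = 1 :=
    LoopGraph.dist_eq_one_s7 (LoopGraph.Walk.cons tM2B (LoopGraph.Walk.nil _)) hM2B
  have dM2C : T.dist M2 C = 1 :=
    LoopGraph.dist_eq_one_s7 (LoopGraph.Walk.cons tM2C (LoopGraph.Walk.nil _)) hM2C
  have dBM2 : T.dist B M2 = 1 :=
    LoopGraph.dist_eq_one_s7 (LoopGraph.Walk.cons tBM2 (LoopGraph.Walk.nil _)) (Ne.symm hM2B)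
  have dAB : T.dist A B = 2 :=
    LoopGraph.dist_eq_two
      (LoopGraph.Walk.cons tAM1 (LoopGraph.Walk.cons tM1B (LoopGraph.Walk.nil _))) hAB hnAB
  have dAC : T.dist A C = 2 :=
    LoopGraph.dist_eq_two
      (LoopGraph.Walk.cons tAM1 (LoopGraph.Walk.cons tM1C (LoopGraph.Walk.nil _))) hAC hnAC
  have dBC : T.dist B C = 2 :=
    LoopGraph.dist_eq_two
      (LoopGraph.Walk.cons tBM1 (LoopGraph.Walk.cons tM1C (LoopGraph.Walk.nil _))) hBC hnBC
  -- medians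
  have hmed1' : T.MedianOf M1 A B C := by
    refine ⟨?_, ?_, ?_⟩ <;> unfold LoopGraph.Between
    · rw [dAM1, dM1B, dAB]
    · rw [dAM1, dM1C, dAC]
    · rw [dBM1, dM1C, dBC]
  have hmed2 : T.MedianOf M2 A B C := by
    refine ⟨?_, ?_, ?_⟩ <;> unfold LoopGraph.Between
    · rw [dAM2, dM2B, dAB]
    · rw [dAM2, dM2C, dAC]
    · rw [dBM2, dM2C, dBC]
  have hM1M2 : M1 ≠ M2 := fun h => hv13 (congrArg Prod.fst h)
  refine ⟨?_, M1, M2, hM1M2, hmed1', hmed2⟩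
  rintro ⟨-, -, huniq⟩
  obtain ⟨m, -, hu⟩ := huniq A B C
  exact hM1M2 ((hu M1 hmed1').trans (hu M2 hmed2).symm)
end
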